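/- The map from RBM parameters λ = (a, w, b) ∈ ℝ^d × ℝ^d × ℝ to conditional independence model parameters (ψ, η, π) ∈ (0,1)^d × (0,1)^d × (0,1), given by ψ_i = σ(a_i + w_i), η_i = 1 - σ(a_i), π = (Σ_x e^{aᵀx+b+xᵀw})/(Σ_x (e^{aᵀx} + e^{aᵀx+b+xᵀw})), is surjective onto (0,1)^d × (0,1)^d × (0,1). -/

import Mathlib

open Finset Real

/-- The sigmoid function σ(z) = 1/(1+e^{-z}). -/
noncomputable def sig (z : ℝ) : ℝ := 1 / (1 + Real.exp (-z))

/-- Real value of a binary unit. -/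
def bv (b : Bool) : ℝ := if b then 1 else 0

/-- The map λ = (a, w, b) ↦ θ = (ψ, η, π) from RBM parameters (one hidden unit) to
conditional-independence-model parameters. -/
noncomputable def thetaMap (d : ℕ) :
    ((Fin d → ℝ) × (Fin d → ℝ) × ℝ) → ((Fin d → ℝ) × (Fin d → ℝ) × ℝ) :=
  fun lam =>
    let a := lam.1; let w := lam.2.1; let b := lam.2.2
    ((fun i => sig (a i + w i)),
     (fun i => 1 - sig (a i)),
     (∑ x : Fin d → Bool,
        Real.exp ((∑ i, a i * bv (x i)) + b + ∑ i, w i * bv (x i))) /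
       (∑ x : Fin d → Bool,
        (Real.exp (∑ i, a i * bv (x i)) +
          Real.exp ((∑ i, a i * bv (x i)) + b + ∑ i, w i * bv (x i)))))

/-! Every coordinate of θ is a sigmoid: ψ_i = σ(a_i + w_i), η_i = σ(-a_i), and
π = σ(b + log Z(a + w) - log Z(a)), where Z(c) = Σ_x e^{cᵀx}. Since σ maps ℝ onto (0,1),
one solves for a, then w, then b. -/

lemma sig_eq_sigmoid : sig = Real.sigmoid := by
  funext z
  rw [sig, one_div, Real.sigmoid_def]

lemma exists_sig_eq {p : ℝ} (hp : p ∈ Set.Ioo (0 : ℝ) 1) : ∃ z, sig z = p := by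
  rwa [sig_eq_sigmoid, ← Set.mem_range, Real.range_sigmoid]

lemma one_sub_sig (z : ℝ) : 1 - sig z = sig (-z) := by
  rw [sig_eq_sigmoid, Real.sigmoid_neg]

lemma exp_div_exp_add_exp (u v : ℝ) : exp u / (exp v + exp u) = sig (u - v) := by
  rw [sig, neg_sub, exp_sub]
  field_simp
  ring

noncomputable def partitionFn {d : ℕ} (a : Fin d → ℝ) : ℝ :=
  ∑ x : Fin d → Bool, exp (∑ i, a i * bv (x i))

lemma partitionFn_pos {d : ℕ} (a : Fin d → ℝ) : 0 < partitionFn a :=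
  Finset.sum_pos (fun _ _ => exp_pos _) Finset.univ_nonempty

lemma thetaMap_snd_snd {d : ℕ} (a w : Fin d → ℝ) (b : ℝ) :
    (thetaMap d (a, w, b)).2.2 = sig (b + log (partitionFn (a + w)) - log (partitionFn a)) := by
  have hhidden : ∑ x : Fin d → Bool, exp ((∑ i, a i * bv (x i)) + b + ∑ i, w i * bv (x i))
      = exp (b + log (partitionFn (a + w))) := by
    rw [exp_add, exp_log (partitionFn_pos _), partitionFn, Finset.mul_sum]
    refine Finset.sum_congr rfl fun x _ => ?_
    rw [← exp_add]
    congr 1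
    simp only [Pi.add_apply, add_mul, Finset.sum_add_distrib]
    ring
  rw [← exp_div_exp_add_exp, ← hhidden, exp_log (partitionFn_pos _), partitionFn,
    ← Finset.sum_add_distrib]
  rfl

/-- the map λ ↦ θ is surjective onto (0,1)^d × (0,1)^d × (0,1). -/
theorem thetaMap_surjective (d : ℕ) (ψ η : Fin d → ℝ) (piY : ℝ)
    (hψ : ∀ i, ψ i ∈ Set.Ioo (0 : ℝ) 1) (hη : ∀ i, η i ∈ Set.Ioo (0 : ℝ) 1)
    (hpi : piY ∈ Set.Ioo (0 : ℝ) 1) :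
    ∃ (a w : Fin d → ℝ) (b : ℝ), thetaMap d (a, w, b) = (ψ, η, piY) := by
  choose s hs using fun i => exists_sig_eq (hψ i)
  choose t ht using fun i => exists_sig_eq (hη i)
  obtain ⟨u, hu⟩ := exists_sig_eq hpi
  set a : Fin d → ℝ := -t
  set w : Fin d → ℝ := s + t
  refine ⟨a, w, u - log (partitionFn (a + w)) + log (partitionFn a), ?_⟩
  refine Prod.ext (funext fun i => ?_) (Prod.ext (funext fun i => ?_) ?_)
  · simp [thetaMap, a, w, hs]
  · simp [thetaMap, a, one_sub_sig, ht]
  · rw [thetaMap_snd_snd, ← hu]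
    ring_nf
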